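/- Let Ω be a nonempty compact convex subset of ℝ^n (n ≥ 2) and δ > 0. Then for every unit vector v, the level of the maximal cap of the δ-parallel body equals that of Ω: l_{Ω_δ}(v) = l_Ω(v). -/

import Mathlib

/-!
For each level `b`, the reflection property of the cap at height `b` holds for `Ω` if and only
if it holds for `Ω_δ`; the two levels are then infima of the same set.

If `Ω` has it, a point `z` of the cap of `Ω_δ` lies within `δ` of some `x ∈ Ω`. Either `x` lies
in the cap, and the reflection, an isometry, keeps `R z` within `δ` of `R x ∈ Ω`; or `x` lies
below the hyperplane, and then reflecting `z` only brings it closer to `x`.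

Conversely, suppose `x` lies in the cap of `Ω` but `y = R x ∉ Ω`. Let `p` be the point of `Ω`
nearest to `y`. Since `x ∈ Ω` lies on the far side of the supporting hyperplane at `p` and
`x - y` is a positive multiple of `v`, the outward normal `y - p` has negative `v`-component.
Pushing `y` outward by `δ` gives a point at distance `d(y, Ω) + δ > δ` from `Ω`, which is the
reflection of a point in the cap of `Ω_δ` within `δ` of `x`.
-/

open scoped RealInnerProductSpace

/-- Reflection in the hyperplane `{x : x·v = b}` (for a unit vector `v`). -/
noncomputable def reflHyp {n : ℕ} (v : EuclideanSpace ℝ (Fin n)) (b : ℝ)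
    (x : EuclideanSpace ℝ (Fin n)) : EuclideanSpace ℝ (Fin n) :=
  x - (2 * (⟪x, v⟫ - b)) • v

/-- The open cap of `X` above the hyperplane `{x : x·v = b}`. -/
def cap {n : ℕ} (X : Set (EuclideanSpace ℝ (Fin n))) (v : EuclideanSpace ℝ (Fin n)) (b : ℝ) :
    Set (EuclideanSpace ℝ (Fin n)) :=
  X ∩ {x | b < ⟪x, v⟫}

/-- The level of the maximal cap of `X` in direction `v`. -/
noncomputable def level {n : ℕ} (X : Set (EuclideanSpace ℝ (Fin n)))
    (v : EuclideanSpace ℝ (Fin n)) : ℝ :=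
  sInf {a : ℝ | ∀ b : ℝ, a ≤ b → reflHyp v b '' cap X v b ⊆ X}

/-- The minimal unfolded region (heart) of `X`. -/
noncomputable def Uf {n : ℕ} (X : Set (EuclideanSpace ℝ (Fin n))) :
    Set (EuclideanSpace ℝ (Fin n)) :=
  ⋂ v ∈ {v : EuclideanSpace ℝ (Fin n) | ‖v‖ = 1}, {x | ⟪x, v⟫ ≤ level X v}

/-- The δ-parallel body of `Ω`: the union of closed δ-balls centered in `Ω`. -/
def parallelBody {n : ℕ} (Ω : Set (EuclideanSpace ℝ (Fin n))) (δ : ℝ) :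
    Set (EuclideanSpace ℝ (Fin n)) :=
  ⋃ x ∈ Ω, Metric.closedBall x δ

section InnerProductSpace

variable {F : Type*} [NormedAddCommGroup F] [InnerProductSpace ℝ F]

theorem norm_le_norm_add_sub_of_inner_le_zero {p q u : F} (h : ⟪u, q - p⟫ ≤ 0) :
    ‖u‖ ≤ ‖p + u - q‖ := by
  have hsq : ‖p + u - q‖ ^ 2 = ‖u‖ ^ 2 - 2 * ⟪u, q - p⟫ + ‖q - p‖ ^ 2 := by
    rw [show p + u - q = u - (q - p) by abel, norm_sub_sq_real]
  refine (pow_le_pow_iff_left₀ (norm_nonneg _) (norm_nonneg _) two_ne_zero).mp ?_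
  nlinarith [sq_nonneg ‖q - p‖]

theorem Convex.exists_forall_inner_sub_le_zero {K : Set F} (hne : K.Nonempty)
    (hc : IsComplete K) (hK : Convex ℝ K) (y : F) :
    ∃ p ∈ K, ∀ q ∈ K, ⟪y - p, q - p⟫ ≤ 0 := by
  obtain ⟨p, hp, hmin⟩ := exists_norm_eq_iInf_of_complete_convex hne hc hK y
  exact ⟨p, hp, (norm_eq_iInf_iff_real_inner_le_zero hK hp).mp hmin⟩

end InnerProductSpace

section Reflection

variable {n : ℕ} {v : EuclideanSpace ℝ (Fin n)}

theorem inner_reflHyp (hv : ‖v‖ = 1) (b : ℝ) (x : EuclideanSpace ℝ (Fin n)) :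
    ⟪reflHyp v b x, v⟫ = 2 * b - ⟪x, v⟫ := by
  rw [reflHyp, inner_sub_left, real_inner_smul_left, real_inner_self_eq_norm_sq, hv]
  ring

theorem reflHyp_reflHyp (hv : ‖v‖ = 1) (b : ℝ) (x : EuclideanSpace ℝ (Fin n)) :
    reflHyp v b (reflHyp v b x) = x := by
  rw [reflHyp, inner_reflHyp hv, reflHyp]
  module

theorem norm_sub_smul_sq (hv : ‖v‖ = 1) (u : EuclideanSpace ℝ (Fin n)) (c : ℝ) :
    ‖u - c • v‖ ^ 2 = ‖u‖ ^ 2 - 2 * c * ⟪u, v⟫ + c ^ 2 := by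
  rw [norm_sub_sq_real, real_inner_smul_right, norm_smul, hv, Real.norm_eq_abs, mul_one, sq_abs]
  ring

theorem dist_reflHyp_reflHyp (hv : ‖v‖ = 1) (b : ℝ) (x y : EuclideanSpace ℝ (Fin n)) :
    dist (reflHyp v b x) (reflHyp v b y) = dist x y := by
  have hsub : reflHyp v b x - reflHyp v b y = (x - y) - (2 * ⟪x - y, v⟫) • v := by
    simp only [reflHyp, inner_sub_left]
    module
  rw [dist_eq_norm, dist_eq_norm, ← sq_eq_sq₀ (norm_nonneg _) (norm_nonneg _), hsub,
    norm_sub_smul_sq hv]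
  ring

theorem dist_reflHyp_le (hv : ‖v‖ = 1) {b : ℝ} {x z : EuclideanSpace ℝ (Fin n)}
    (hx : ⟪x, v⟫ ≤ b) (hz : b ≤ ⟪z, v⟫) : dist (reflHyp v b z) x ≤ dist z x := by
  have hsub : reflHyp v b z - x = (z - x) - (2 * (⟪z, v⟫ - b)) • v := by
    rw [reflHyp]
    module
  rw [dist_eq_norm, dist_eq_norm,
    ← pow_le_pow_iff_left₀ (norm_nonneg _) (norm_nonneg _) two_ne_zero, hsub,
    norm_sub_smul_sq hv, inner_sub_left]
  nlinarith [mul_nonneg (sub_nonneg.mpr hz) (sub_nonneg.mpr hx)]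

theorem mem_parallelBody {Ω : Set (EuclideanSpace ℝ (Fin n))} {δ : ℝ}
    {z : EuclideanSpace ℝ (Fin n)} : z ∈ parallelBody Ω δ ↔ ∃ x ∈ Ω, dist z x ≤ δ := by
  simp [parallelBody, Metric.mem_closedBall]

theorem reflHyp_image_cap_parallelBody_subset (hv : ‖v‖ = 1)
    {Ω : Set (EuclideanSpace ℝ (Fin n))} {δ b : ℝ} (h : reflHyp v b '' cap Ω v b ⊆ Ω) :
    reflHyp v b '' cap (parallelBody Ω δ) v b ⊆ parallelBody Ω δ := by
  rintro _ ⟨z, ⟨hz, hzb⟩, rfl⟩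
  obtain ⟨x, hx, hzx⟩ := mem_parallelBody.mp hz
  rw [mem_parallelBody]
  by_cases hxb : b < ⟪x, v⟫
  · exact ⟨reflHyp v b x, h ⟨x, ⟨hx, hxb⟩, rfl⟩, (dist_reflHyp_reflHyp hv b z x).trans_le hzx⟩
  · exact ⟨x, hx, (dist_reflHyp_le hv (not_lt.mp hxb) (le_of_lt hzb)).trans hzx⟩

theorem reflHyp_image_cap_subset_of_parallelBody (hv : ‖v‖ = 1)
    {Ω : Set (EuclideanSpace ℝ (Fin n))} (hΩ : IsClosed Ω) (hconv : Convex ℝ Ω)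
    {δ b : ℝ} (hδ : 0 ≤ δ)
    (h : reflHyp v b '' cap (parallelBody Ω δ) v b ⊆ parallelBody Ω δ) :
    reflHyp v b '' cap Ω v b ⊆ Ω := by
  rintro _ ⟨x, ⟨hx, hxb : b < ⟪x, v⟫⟩, rfl⟩
  set y := reflHyp v b x with hy_def
  by_contra hyΩ
  obtain ⟨p, hp, hnormal⟩ := hconv.exists_forall_inner_sub_le_zero ⟨x, hx⟩ hΩ.isComplete y
  have hd : 0 < ‖y - p‖ := norm_pos_iff.mpr (sub_ne_zero.mpr fun hyp => hyΩ (hyp ▸ hp))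
  have hnormal_v : ⟪y - p, v⟫ < 0 := by
    have hxp : x - p = (2 * (⟪x, v⟫ - b)) • v + (y - p) := by
      rw [hy_def, reflHyp]
      module
    have := hnormal x hx
    rw [hxp, inner_add_right, real_inner_smul_right, real_inner_self_eq_norm_sq] at this
    nlinarith [sq_pos_of_pos hd]
  obtain ⟨t, ht0, ht⟩ : ∃ t : ℝ, 0 ≤ t ∧ t * ‖y - p‖ = δ :=
    ⟨δ / ‖y - p‖, by positivity, div_mul_cancel₀ _ hd.ne'⟩
  have hfar : ∀ q ∈ Ω, δ < dist (p + (1 + t) • (y - p)) q := by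
    intro q hq
    have hinner : ⟪(1 + t) • (y - p), q - p⟫ ≤ 0 := by
      rw [real_inner_smul_left]
      exact mul_nonpos_of_nonneg_of_nonpos (by positivity) (hnormal q hq)
    have hle := norm_le_norm_add_sub_of_inner_le_zero hinner
    rw [norm_smul, Real.norm_of_nonneg (by positivity)] at hle
    rw [dist_eq_norm]
    nlinarith
  have hz_cap : reflHyp v b (p + (1 + t) • (y - p)) ∈ cap (parallelBody Ω δ) v b := by
    refine ⟨mem_parallelBody.mpr ⟨x, hx, ?_⟩, ?_⟩
    · rw [← reflHyp_reflHyp hv b x, dist_reflHyp_reflHyp hv, dist_eq_norm, ← hy_def,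
        show p + (1 + t) • (y - p) - y = t • (y - p) by module, norm_smul,
        Real.norm_of_nonneg ht0, ht]
    · change b < ⟪reflHyp v b _, v⟫
      rw [inner_reflHyp hv, show p + (1 + t) • (y - p) = y + t • (y - p) by module,
        inner_add_left, hy_def, inner_reflHyp hv, real_inner_smul_left]
      nlinarith [mul_nonneg ht0 (neg_nonneg.mpr hnormal_v.le)]
  obtain ⟨q, hq, hq_near⟩ := mem_parallelBody.mp (reflHyp_reflHyp hv b _ ▸ h ⟨_, hz_cap, rfl⟩)
  exact (hfar q hq).not_ge hq_near

theorem reflHyp_image_cap_parallelBody_subset_iff (hv : ‖v‖ = 1)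
    {Ω : Set (EuclideanSpace ℝ (Fin n))} (hΩ : IsClosed Ω) (hconv : Convex ℝ Ω)
    {δ : ℝ} (hδ : 0 ≤ δ) (b : ℝ) :
    reflHyp v b '' cap (parallelBody Ω δ) v b ⊆ parallelBody Ω δ ↔
      reflHyp v b '' cap Ω v b ⊆ Ω :=
  ⟨reflHyp_image_cap_subset_of_parallelBody hv hΩ hconv hδ,
    reflHyp_image_cap_parallelBody_subset hv⟩

end Reflection

theorem stmt18_general {n : ℕ} (Ω : Set (EuclideanSpace ℝ (Fin n)))
    (hΩ : IsCompact Ω) (hconv : Convex ℝ Ω) (δ : ℝ) (hδ : 0 < δ)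
    (v : EuclideanSpace ℝ (Fin n)) (hv : ‖v‖ = 1) :
    level (parallelBody Ω δ) v = level Ω v := by
  unfold level
  congr 1
  ext a
  exact forall₂_congr fun b _ =>
    reflHyp_image_cap_parallelBody_subset_iff hv hΩ.isClosed hconv hδ.le b

theorem stmt18 {n : ℕ} (hn : 2 ≤ n) (Ω : Set (EuclideanSpace ℝ (Fin n)))
    (hΩne : Ω.Nonempty) (hΩ : IsCompact Ω) (hconv : Convex ℝ Ω) (δ : ℝ) (hδ : 0 < δ)
    (v : EuclideanSpace ℝ (Fin n)) (hv : ‖v‖ = 1) :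
    level (parallelBody Ω δ) v = level Ω v :=
  stmt18_general Ω hΩ hconv δ hδ v hv
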